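/- arXiv:2409.17260 — 2 statements merged into one kernel-verified Lean document; each statement's English description precedes it below -/
import Mathlib

section
/- A bounded paranormal operator T satisfies ‖Tⁿx‖·‖x‖^{n−1} ≥ ‖Tx‖ⁿ for all x and all n ≥ 1, and consequently is normaloid: its spectral radius equals its norm. -/
/-!
Paranormality at the vector `Tⁿ x` says that the orbit norms `aₖ = ‖Tᵏ x‖` form a log-convex
sequence, `aₖ₊₁² ≤ aₖ₊₂ aₖ`. Log-convexity makes the ratios `aₖ₊₁ / aₖ` increase, so
`a₁ⁿ ≤ aₙ a₀ⁿ⁻¹`, which is the first claim. Taking the supremum over unit vectors gives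
`‖T‖ⁿ ≤ ‖Tⁿ‖`, hence `‖Tⁿ‖ = ‖T‖ⁿ`, and Gelfand's formula turns this into `r(T) = ‖T‖`.
-/

open Filter

section LogConvex

variable {a : ℕ → ℝ}

theorem mul_le_mul_succ_of_sq_le_mul (ha : ∀ n, 0 ≤ a n)
    (hconv : ∀ n, a (n + 1) ^ 2 ≤ a (n + 2) * a n) (n : ℕ) :
    a 1 * a n ≤ a 0 * a (n + 1) := by
  induction n with
  | zero => rw [mul_comm]
  | succ n ih =>
    rcases (ha n).eq_or_lt with hzero | hpos
    · have hsq : a (n + 1) ^ 2 ≤ 0 := by simpa [← hzero] using hconv n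
      have : a (n + 1) = 0 := pow_eq_zero_iff two_ne_zero |>.mp (le_antisymm hsq (sq_nonneg _))
      rw [this, mul_zero]
      exact mul_nonneg (ha 0) (ha _)
    · refine le_of_mul_le_mul_right ?_ hpos
      calc a 1 * a (n + 1) * a n = a 1 * a n * a (n + 1) := by ring
        _ ≤ a 0 * a (n + 1) * a (n + 1) := mul_le_mul_of_nonneg_right ih (ha _)
        _ = a 0 * a (n + 1) ^ 2 := by ring
        _ ≤ a 0 * (a (n + 2) * a n) := mul_le_mul_of_nonneg_left (hconv n) (ha 0)
        _ = a 0 * a (n + 1 + 1) * a n := by ring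

theorem pow_le_mul_pow_of_sq_le_mul (ha : ∀ n, 0 ≤ a n)
    (hconv : ∀ n, a (n + 1) ^ 2 ≤ a (n + 2) * a n) (n : ℕ) :
    a 1 ^ (n + 1) ≤ a (n + 1) * a 0 ^ n := by
  induction n with
  | zero => simp
  | succ n ih =>
    calc a 1 ^ (n + 2) = a 1 * a 1 ^ (n + 1) := by ring
      _ ≤ a 1 * (a (n + 1) * a 0 ^ n) := mul_le_mul_of_nonneg_left ih (ha 1)
      _ = a 1 * a (n + 1) * a 0 ^ n := by ring
      _ ≤ a 0 * a (n + 2) * a 0 ^ n :=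
        mul_le_mul_of_nonneg_right (mul_le_mul_succ_of_sq_le_mul ha hconv _) (by positivity [ha 0])
      _ = a (n + 2) * a 0 ^ (n + 1) := by ring

end LogConvex

theorem spectralRadius_eq_nnnorm_of_norm_pow_le {A : Type*} [NormedRing A] [NormedAlgebra ℂ A]
    [CompleteSpace A] {a : A} (h : ∀ n ≠ 0, ‖a‖ ^ n ≤ ‖a ^ n‖) :
    spectralRadius ℂ a = ‖a‖₊ := by
  have hpow : ∀ n ≠ 0, ‖a ^ n‖₊ = ‖a‖₊ ^ n := fun n hn =>
    le_antisymm (nnnorm_pow_le' a (Nat.pos_of_ne_zero hn)) (by exact_mod_cast h n hn)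
  refine tendsto_nhds_unique (spectrum.pow_nnnorm_pow_one_div_tendsto_nhds_spectralRadius a)
    (tendsto_const_nhds.congr' ?_)
  filter_upwards [eventually_ne_atTop 0] with n hn
  rw [hpow n hn, ENNReal.coe_pow, ← ENNReal.rpow_natCast, ← ENNReal.rpow_mul]
  simp [hn]

def IsParanormal {𝕜 E : Type*} [Semiring 𝕜] [SeminormedAddCommGroup E] [Module 𝕜 E]
    (T : E →L[𝕜] E) : Prop :=
  ∀ x, ‖T x‖ ^ 2 ≤ ‖T (T x)‖ * ‖x‖

namespace IsParanormal

section Seminormed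

variable {𝕜 E : Type*} [Semiring 𝕜] [SeminormedAddCommGroup E] [Module 𝕜 E] {T : E →L[𝕜] E}

theorem norm_pow_apply_sq_le (hT : IsParanormal T) (x : E) (n : ℕ) :
    ‖(T ^ (n + 1)) x‖ ^ 2 ≤ ‖(T ^ (n + 2)) x‖ * ‖(T ^ n) x‖ := by
  simpa only [pow_succ', mul_apply_eq_comp] using hT ((T ^ n) x)

theorem norm_apply_pow_le (hT : IsParanormal T) (x : E) {n : ℕ} (hn : n ≠ 0) :
    ‖T x‖ ^ n ≤ ‖(T ^ n) x‖ * ‖x‖ ^ (n - 1) := by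
  obtain ⟨m, rfl⟩ := Nat.exists_eq_succ_of_ne_zero hn
  simpa using pow_le_mul_pow_of_sq_le_mul (a := fun k => ‖(T ^ k) x‖) (fun _ => norm_nonneg _)
    (hT.norm_pow_apply_sq_le x) m

end Seminormed

theorem norm_pow_le_norm_pow {𝕜 E : Type*} [NontriviallyNormedField 𝕜] [SeminormedAddCommGroup E]
    [NormedSpace 𝕜 E] {T : E →L[𝕜] E} (hT : IsParanormal T) {n : ℕ} (hn : n ≠ 0) :
    ‖T‖ ^ n ≤ ‖T ^ n‖ := by
  set M := ‖T ^ n‖ ^ (n⁻¹ : ℝ)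
  have hM : M ^ n = ‖T ^ n‖ := Real.rpow_inv_natCast_pow (norm_nonneg _) hn
  have hTM : ‖T‖ ≤ M := by
    refine T.opNorm_le_bound (by positivity) fun x => ?_
    refine (pow_le_pow_iff_left₀ (norm_nonneg _) (by positivity) hn).mp ?_
    calc ‖T x‖ ^ n ≤ ‖(T ^ n) x‖ * ‖x‖ ^ (n - 1) := hT.norm_apply_pow_le x hn
      _ ≤ ‖T ^ n‖ * ‖x‖ * ‖x‖ ^ (n - 1) := by gcongr; exact (T ^ n).le_opNorm x
      _ = (M * ‖x‖) ^ n := by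
        rw [mul_pow, hM, mul_assoc, ← pow_succ', Nat.sub_add_cancel (Nat.pos_of_ne_zero hn)]
  rw [← hM]
  exact pow_le_pow_left₀ (norm_nonneg _) hTM n

end IsParanormal

theorem stmt_2 {H : Type*} [NormedAddCommGroup H] [InnerProductSpace ℂ H]
    [CompleteSpace H] (T : H →L[ℂ] H)
    (hT : ∀ x : H, ‖T x‖ ^ 2 ≤ ‖(T ∘L T) x‖ * ‖x‖) :
    (∀ x : H, ∀ n : ℕ, 1 ≤ n → ‖T x‖ ^ n ≤ ‖(T ^ n) x‖ * ‖x‖ ^ (n - 1)) ∧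
      spectralRadius ℂ T = ‖T‖₊ := by
  have hpara : IsParanormal T := hT
  exact ⟨fun x n hn => hpara.norm_apply_pow_le x (Nat.one_le_iff_ne_zero.mp hn),
    spectralRadius_eq_nnnorm_of_norm_pow_le fun n hn => hpara.norm_pow_le_norm_pow hn⟩
end

section
/- Let T be a bounded totally paranormal operator and μ₁ ≠ μ₂ nonzero eigenvalues with |μ₁| = |μ₂|. Then for every x ∈ ker(T − μ₁I) and y ∈ ker(T − μ₂I), ‖y‖ ≤ ‖x + y‖. -/
/-!
`S := T - μ₁` kills `x` and acts on `y` as multiplication by `μ₂ - μ₁ ≠ 0`, so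
`S (x + y) = (μ₂ - μ₁) y` and `S² (x + y) = (μ₂ - μ₁)² y`; paranormality of `S` at `x + y`
then gives `‖y‖² ≤ ‖y‖ ‖x + y‖`.
-/

section Paranormal

variable {𝕜 E : Type*} [NontriviallyNormedField 𝕜] [NormedAddCommGroup E] [NormedSpace 𝕜 E]

theorem ContinuousLinearMap.sub_smul_one_apply_of_apply_eq_smul {T : E →L[𝕜] E} {μ : 𝕜} {y : E}
    (hy : T y = μ • y) (lam : 𝕜) : (T - lam • 1) y = (μ - lam) • y := by
  rw [sub_apply, smul_apply, one_apply_eq_self, hy, sub_smul]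

theorem norm_le_of_paranormal_at_of_apply_eq_smul_eigenvector {S : E →L[𝕜] E} {v y : E} {c : 𝕜}
    (hS : ‖S v‖ ^ 2 ≤ ‖(S ∘L S) v‖ * ‖v‖) (hc : c ≠ 0) (hy : S y = c • y)
    (hv : S v = c • y) : ‖y‖ ≤ ‖v‖ := by
  rw [ContinuousLinearMap.comp_apply, hv, map_smul, hy, norm_smul, norm_smul, norm_smul] at hS
  rcases (norm_nonneg y).eq_or_lt with hy0 | hy0
  · rw [← hy0]
    exact norm_nonneg v
  have hc' : 0 < ‖c‖ ^ 2 * ‖y‖ := by positivity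
  nlinarith

end Paranormal

theorem stmt_18_general {H : Type*} [NormedAddCommGroup H] [InnerProductSpace ℂ H]
    (T : H →L[ℂ] H)
    (hT : ∀ (lam : ℂ) (x : H),
      ‖(T - lam • 1) x‖ ^ 2 ≤ ‖((T - lam • 1) ∘L (T - lam • 1)) x‖ * ‖x‖)
    (μ₁ μ₂ : ℂ) (hne : μ₁ ≠ μ₂)
    (x y : H) (hx : T x = μ₁ • x) (hy : T y = μ₂ • y) :
    ‖y‖ ≤ ‖x + y‖ := by
  have hy' := T.sub_smul_one_apply_of_apply_eq_smul hy μ₁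
  refine norm_le_of_paranormal_at_of_apply_eq_smul_eigenvector (hT μ₁ (x + y))
    (sub_ne_zero.2 hne.symm) hy' ?_
  rw [map_add, T.sub_smul_one_apply_of_apply_eq_smul hx, hy', sub_self, zero_smul, zero_add]

theorem stmt_18 {H : Type*} [NormedAddCommGroup H] [InnerProductSpace ℂ H]
    [CompleteSpace H] (T : H →L[ℂ] H)
    (hT : ∀ (lam : ℂ) (x : H),
      ‖(T - lam • 1) x‖ ^ 2 ≤ ‖((T - lam • 1) ∘L (T - lam • 1)) x‖ * ‖x‖)
    (μ₁ μ₂ : ℂ) (h1 : μ₁ ≠ 0) (h2 : μ₂ ≠ 0) (hne : μ₁ ≠ μ₂)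
    (habs : ‖μ₁‖ = ‖μ₂‖)
    (x y : H) (hx : T x = μ₁ • x) (hy : T y = μ₂ • y) :
    ‖y‖ ≤ ‖x + y‖ :=
  stmt_18_general T hT μ₁ μ₂ hne x y hx hy
end
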